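/- arXiv:2107.10529 — 4 statements merged into one kernel-verified Lean document; each statement's English description precedes it below -/
import Mathlib

section
/- Let ξ = (p,q) ∈ ℤ² be a primitive lattice vector and let ε be a real number with 0 < ε < 1/(2‖ξ‖). Consider the open strip S_ε = { x ∈ ℝ² : ε < (q·x₁ − p·x₂)/‖ξ‖ < 1/‖ξ‖ − ε }, which is parallel to ξ and has width 1/‖ξ‖ − 2ε. Then: (i) S_ε is disjoint from the closed Euclidean disk of radius ε centered at every lattice point ℓ ∈ ℤ²; (ii) this is sharp: the distance from the origin to the boundary line { x : (q·x₁ − p·x₂)/‖ξ‖ = ε } equals ε, and for every lattice point ℓ with q·ℓ₁ − p·ℓ₂ = 1 (such ℓ exist) the distance from ℓ to the boundary line { x : (q·x₁ − p·x₂)/‖ξ‖ = 1/‖ξ‖ − ε } equals ε. Hence the corridor in direction ξ for scatterers of radius ε has width exactly 1/‖ξ‖ − 2ε. -/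
/-- The lattice point `ℓ ∈ ℤ²` viewed as a point of the Euclidean plane. -/
noncomputable def latPt (ℓ : ℤ × ℤ) : EuclideanSpace ℝ (Fin 2) :=
  (WithLp.equiv 2 (Fin 2 → ℝ)).symm ![(ℓ.1 : ℝ), (ℓ.2 : ℝ)]

/-- A unit-direction linear functional on the plane is 1-Lipschitz. -/
lemma aux_lip (a b : ℝ) (hab : a^2 + b^2 = 1) (x y : EuclideanSpace ℝ (Fin 2)) :
    |(a * x 0 + b * x 1) - (a * y 0 + b * y 1)| ≤ dist x y := by
  have hd : dist x y = Real.sqrt ((x 0 - y 0)^2 + (x 1 - y 1)^2) := by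
    rw [EuclideanSpace.dist_eq]; simp [Fin.sum_univ_two, Real.dist_eq, sq_abs]
  rw [hd, ← Real.sqrt_sq_eq_abs ((a * x 0 + b * x 1) - (a * y 0 + b * y 1))]
  apply Real.sqrt_le_sqrt
  nlinarith [sq_nonneg (a * (x 1 - y 1) - b * (x 0 - y 0))]

/-- Distance from a point to a line given by a unit-normal equation. -/
lemma aux_infDist (a b c : ℝ) (hab : a^2 + b^2 = 1) (z : EuclideanSpace ℝ (Fin 2)) :
    Metric.infDist z {x : EuclideanSpace ℝ (Fin 2) | a * x 0 + b * x 1 = c}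
      = |a * z 0 + b * z 1 - c| := by
  set t : ℝ := a * z 0 + b * z 1 - c with ht
  set y : EuclideanSpace ℝ (Fin 2) :=
    (WithLp.equiv 2 (Fin 2 → ℝ)).symm ![z 0 - t * a, z 1 - t * b] with hy
  have hy0 : y 0 = z 0 - t * a := by simp [hy]
  have hy1 : y 1 = z 1 - t * b := by simp [hy]
  have hymem : y ∈ {x : EuclideanSpace ℝ (Fin 2) | a * x 0 + b * x 1 = c} := by
    simp only [Set.mem_setOf_eq, hy0, hy1]
    rw [show a*(z 0 - t*a) + b*(z 1 - t*b) = (a*z 0 + b*z 1) - t*(a^2+b^2) by ring,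
      hab, mul_one, ht]; ring
  have hdzy : dist z y = |t| := by
    rw [EuclideanSpace.dist_eq]
    simp only [Fin.sum_univ_two, Real.dist_eq, sq_abs, hy0, hy1]
    rw [show z 0 - (z 0 - t * a) = t * a by ring,
      show z 1 - (z 1 - t * b) = t * b by ring,
      show (t*a)^2 + (t*b)^2 = t^2 * (a^2+b^2) by ring, hab, mul_one,
      Real.sqrt_sq_eq_abs]
  apply le_antisymm
  · calc Metric.infDist z _ ≤ dist z y := Metric.infDist_le_dist_of_mem hymem
    _ = |t| := hdzy
  · by_contra h
    push_neg at h
    obtain ⟨w, hw, hwd⟩ := (Metric.infDist_lt_iff ⟨y, hymem⟩).mp h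
    rw [Set.mem_setOf_eq] at hw
    have := aux_lip a b hab z w
    rw [hw] at this
    exact absurd (lt_of_le_of_lt this hwd) (lt_irrefl _)

/-- Lemma 2.1 of the paper, case ε > 0: for a primitive lattice vector `ξ = (p,q)` and
`0 < ε < 1/(2‖ξ‖)`, the open strip `S_ε = { x : ε < (q x₁ - p x₂)/‖ξ‖ < 1/‖ξ‖ - ε }`
is disjoint from the closed ε-disk around every lattice point, and this is sharp:
the origin is at distance exactly ε from the boundary line `{ sd = ε }`, lattice points
`ℓ` with `q ℓ₁ - p ℓ₂ = 1` exist, and each of them is at distance exactly ε from the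
boundary line `{ sd = 1/‖ξ‖ - ε }`. Hence the ξ-corridor has width `1/‖ξ‖ - 2ε`. -/
theorem corridor_width_pos (p q : ℤ) (hne : (p, q) ≠ (0, 0)) (hcop : Int.gcd p q = 1)
    (ε : ℝ) (hε0 : 0 < ε) (hε1 : ε < 1 / (2 * ‖latPt (p, q)‖))
    (sd : EuclideanSpace ℝ (Fin 2) → ℝ)
    (hsd : ∀ x, sd x = ((q : ℝ) * x 0 - (p : ℝ) * x 1) / ‖latPt (p, q)‖)
    (S : Set (EuclideanSpace ℝ (Fin 2)))
    (hS : S = {x | ε < sd x ∧ sd x < 1 / ‖latPt (p, q)‖ - ε}) :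
    (∀ ℓ : ℤ × ℤ, Disjoint S (Metric.closedBall (latPt ℓ) ε)) ∧
    Metric.infDist 0 {x | sd x = ε} = ε ∧
    (∃ ℓ : ℤ × ℤ, q * ℓ.1 - p * ℓ.2 = 1) ∧
    (∀ ℓ : ℤ × ℤ, q * ℓ.1 - p * ℓ.2 = 1 →
      Metric.infDist (latPt ℓ) {x | sd x = 1 / ‖latPt (p, q)‖ - ε} = ε) := by
  set n : ℝ := ‖latPt (p, q)‖ with hn
  have hpq : (p : ℝ)^2 + (q : ℝ)^2 > 0 := by
    have : p ≠ 0 ∨ q ≠ 0 := by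
      by_contra h; push_neg at h; exact hne (by simp [h.1, h.2])
    rcases this with h | h
    · have : (p : ℝ) ≠ 0 := Int.cast_ne_zero.mpr h
      positivity
    · have : (q : ℝ) ≠ 0 := Int.cast_ne_zero.mpr h
      positivity
  have hnval : n = Real.sqrt ((p : ℝ)^2 + (q : ℝ)^2) := by
    rw [hn, EuclideanSpace.norm_eq]
    simp [latPt, Fin.sum_univ_two, sq_abs]
  have hnpos : 0 < n := by rw [hnval]; exact Real.sqrt_pos.mpr hpq
  have hn2 : n^2 = (p : ℝ)^2 + (q : ℝ)^2 := by
    rw [hnval, Real.sq_sqrt hpq.le]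
  set a : ℝ := (q : ℝ) / n with ha
  set b : ℝ := -(p : ℝ) / n with hb
  have hab : a^2 + b^2 = 1 := by
    rw [ha, hb]
    field_simp
    linarith [hn2]
  have hsd' : ∀ x : EuclideanSpace ℝ (Fin 2), sd x = a * x 0 + b * x 1 := by
    intro x
    rw [hsd, ha, hb]
    field_simp
    ring
  have hlat0 : ∀ ℓ : ℤ × ℤ, latPt ℓ 0 = (ℓ.1 : ℝ) := by intro ℓ; simp [latPt]
  have hlat1 : ∀ ℓ : ℤ × ℤ, latPt ℓ 1 = (ℓ.2 : ℝ) := by intro ℓ; simp [latPt]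
  have hsdlat : ∀ ℓ : ℤ × ℤ, sd (latPt ℓ) = ((q * ℓ.1 - p * ℓ.2 : ℤ) : ℝ) / n := by
    intro ℓ
    rw [hsd, hlat0, hlat1]
    push_cast
    ring_nf
  refine ⟨?_, ?_, ?_, ?_⟩
  · -- disjointness
    intro ℓ
    rw [Set.disjoint_left]
    intro x hxS hxB
    rw [hS, Set.mem_setOf_eq] at hxS
    rw [Metric.mem_closedBall] at hxB
    obtain ⟨h1, h2⟩ := hxS
    have hlip : |sd x - sd (latPt ℓ)| ≤ dist x (latPt ℓ) := by
      rw [hsd' x, hsd' (latPt ℓ)]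
      exact aux_lip a b hab x (latPt ℓ)
    have habs : |sd x - sd (latPt ℓ)| ≤ ε := hlip.trans hxB
    rw [abs_le] at habs
    rw [hsdlat] at habs
    set k : ℤ := q * ℓ.1 - p * ℓ.2 with hk
    rcases le_or_gt k 0 with hk0 | hk1
    · have hk0' : (k : ℝ) ≤ 0 := by exact_mod_cast hk0
      have : (k : ℝ) / n ≤ 0 := by
        rw [div_nonpos_iff]; exact Or.inr ⟨hk0', hnpos.le⟩
      linarith [habs.1, habs.2]
    · have hk1' : (1 : ℝ) ≤ (k : ℝ) := by exact_mod_cast hk1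
      have : 1 / n ≤ (k : ℝ) / n := by
        rw [div_le_div_iff₀ hnpos hnpos]; nlinarith
      linarith [habs.1, habs.2]
  · -- distance from origin to { sd = ε }
    have hset : {x : EuclideanSpace ℝ (Fin 2) | sd x = ε}
        = {x : EuclideanSpace ℝ (Fin 2) | a * x 0 + b * x 1 = ε} := by
      ext x; rw [Set.mem_setOf_eq, Set.mem_setOf_eq, hsd' x]
    rw [hset, aux_infDist a b ε hab 0]
    simp [abs_of_pos hε0]
  · -- existence of ℓ with q ℓ₁ - p ℓ₂ = 1
    refine ⟨(Int.gcdB p q, -(Int.gcdA p q)), ?_⟩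
    have hbez := Int.gcd_eq_gcd_ab p q
    rw [hcop] at hbez
    push_cast at hbez
    show q * Int.gcdB p q - p * (-(Int.gcdA p q)) = 1
    linarith [hbez]
  · -- distance from ℓ to { sd = 1/n - ε }
    intro ℓ hℓ
    have hset : {x : EuclideanSpace ℝ (Fin 2) | sd x = 1 / n - ε}
        = {x : EuclideanSpace ℝ (Fin 2) | a * x 0 + b * x 1 = 1 / n - ε} := by
      ext x; rw [Set.mem_setOf_eq, Set.mem_setOf_eq, hsd' x]
    rw [hset, aux_infDist a b (1 / n - ε) hab (latPt ℓ)]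
    have : a * latPt ℓ 0 + b * latPt ℓ 1 = 1 / n := by
      rw [hlat0, hlat1, ha, hb]
      have : (q : ℝ) * (ℓ.1 : ℝ) - (p : ℝ) * (ℓ.2 : ℝ) = 1 := by exact_mod_cast hℓ
      field_simp
      linarith [this]
    rw [this]
    rw [show 1 / n - (1 / n - ε) = ε by ring, abs_of_pos hε0]
end

section
/- Let t ∈ ℝ², R > 0, and let g : ℝ → ℝ be any function. Then ∑_{ξ primitive, 0 < ‖ξ‖ ≤ R} ⟨t, ξ⟩² · g(‖ξ‖) = (‖t‖²/2) · ∑_{ξ primitive, 0 < ‖ξ‖ ≤ R} ‖ξ‖² · g(‖ξ‖), where ⟨·,·⟩ is the standard inner product on ℝ². (Both sums are over the finite set of primitive lattice vectors in the closed disk of radius R.) -/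
open scoped RealInnerProductSpace

/-- The Euclidean norm of a lattice vector `ξ = (p,q) ∈ ℤ²`. -/
noncomputable def znorm (ξ : ℤ × ℤ) : ℝ := Real.sqrt ((ξ.1 : ℝ) ^ 2 + (ξ.2 : ℝ) ^ 2)

/-- A primitive lattice vector: nonzero with coprime coordinates. -/
def IsPrimitive (ξ : ℤ × ℤ) : Prop := ξ ≠ 0 ∧ Int.gcd ξ.1 ξ.2 = 1

/-!
The quarter turn `ξ ↦ ξ^⊥` preserves primitivity and norm, so it permutes the (finite) set of
primitive vectors in the disk. Averaging the sum with its rotated copy and using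
`⟪t, ξ⟫² + ⟪t, ξ^⊥⟫² = ‖t‖² ‖ξ‖²` gives the identity.
-/

def rot90 : ℤ × ℤ ≃ ℤ × ℤ where
  toFun ξ := (-ξ.2, ξ.1)
  invFun ξ := (ξ.2, -ξ.1)
  left_inv ξ := by simp
  right_inv ξ := by simp

lemma rot90_apply (ξ : ℤ × ℤ) : rot90 ξ = (-ξ.2, ξ.1) := rfl

lemma znorm_rot90 (ξ : ℤ × ℤ) : znorm (rot90 ξ) = znorm ξ := by
  simp only [znorm, rot90_apply, Int.cast_neg, neg_sq, add_comm]

lemma isPrimitive_rot90_iff {ξ : ℤ × ℤ} : IsPrimitive (rot90 ξ) ↔ IsPrimitive ξ := by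
  obtain ⟨p, q⟩ := ξ
  simp only [IsPrimitive, rot90_apply, ne_eq, Prod.mk_eq_zero, neg_eq_zero, Int.neg_gcd,
    Int.gcd_comm q p, and_comm (a := q = 0)]

lemma abs_fst_le_znorm (ξ : ℤ × ℤ) : |(ξ.1 : ℝ)| ≤ znorm ξ :=
  Real.abs_le_sqrt (le_add_of_nonneg_right (sq_nonneg _))

lemma abs_snd_le_znorm (ξ : ℤ × ℤ) : |(ξ.2 : ℝ)| ≤ znorm ξ :=
  Real.abs_le_sqrt (le_add_of_nonneg_left (sq_nonneg _))

lemma finite_setOf_znorm_le (R : ℝ) : {ξ : ℤ × ℤ | znorm ξ ≤ R}.Finite := by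
  refine (Set.finite_Icc (-⌈R⌉, -⌈R⌉) (⌈R⌉, ⌈R⌉)).subset fun ξ hξ => ?_
  have bound : ∀ n : ℤ, |(n : ℝ)| ≤ R → -⌈R⌉ ≤ n ∧ n ≤ ⌈R⌉ := fun n hn =>
    abs_le.mp (by exact_mod_cast hn.trans (Int.le_ceil R))
  obtain ⟨hp₁, hp₂⟩ := bound _ ((abs_fst_le_znorm ξ).trans hξ)
  obtain ⟨hq₁, hq₂⟩ := bound _ ((abs_snd_le_znorm ξ).trans hξ)
  exact ⟨⟨hp₁, hq₁⟩, ⟨hp₂, hq₂⟩⟩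

lemma sq_norm_eq (t : EuclideanSpace ℝ (Fin 2)) : ‖t‖ ^ 2 = t 0 ^ 2 + t 1 ^ 2 := by
  rw [EuclideanSpace.norm_eq, Real.sq_sqrt (by positivity)]
  simp [Fin.sum_univ_two]

lemma inner_latPt (t : EuclideanSpace ℝ (Fin 2)) (ξ : ℤ × ℤ) :
    ⟪t, latPt ξ⟫ = t 0 * ξ.1 + t 1 * ξ.2 := by
  simp [latPt, PiLp.inner_apply, Fin.sum_univ_two, mul_comm]

lemma inner_latPt_sq_add_inner_latPt_rot90_sq (t : EuclideanSpace ℝ (Fin 2)) (ξ : ℤ × ℤ) :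
    ⟪t, latPt ξ⟫ ^ 2 + ⟪t, latPt (rot90 ξ)⟫ ^ 2 = ‖t‖ ^ 2 * znorm ξ ^ 2 := by
  rw [inner_latPt, inner_latPt, sq_norm_eq, znorm, Real.sq_sqrt (by positivity)]
  push_cast [rot90_apply]
  ring

theorem primitive_sector_symmetry_general (t : EuclideanSpace ℝ (Fin 2)) (R : ℝ)
    (g : ℝ → ℝ) :
    (∑ᶠ ξ ∈ {ξ : ℤ × ℤ | IsPrimitive ξ ∧ znorm ξ ≤ R}, ⟪t, latPt ξ⟫ ^ 2 * g (znorm ξ)) =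
      ‖t‖ ^ 2 / 2 *
        ∑ᶠ ξ ∈ {ξ : ℤ × ℤ | IsPrimitive ξ ∧ znorm ξ ≤ R}, znorm ξ ^ 2 * g (znorm ξ) := by
  set S := {ξ : ℤ × ℤ | IsPrimitive ξ ∧ znorm ξ ≤ R}
  have hS : S.Finite := (finite_setOf_znorm_le R).subset fun ξ hξ => hξ.2
  have rotate : ∑ᶠ ξ ∈ S, ⟪t, latPt (rot90 ξ)⟫ ^ 2 * g (znorm ξ) =
      ∑ᶠ ξ ∈ S, ⟪t, latPt ξ⟫ ^ 2 * g (znorm ξ) :=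
    finsum_mem_eq_of_bijOn rot90 (rot90.bijOn fun ξ => by
      simp only [S, Set.mem_ofPred_eq, isPrimitive_rot90_iff, znorm_rot90])
      fun ξ _ => by rw [znorm_rot90]
  have pair : 2 * ∑ᶠ ξ ∈ S, ⟪t, latPt ξ⟫ ^ 2 * g (znorm ξ) =
      ‖t‖ ^ 2 * ∑ᶠ ξ ∈ S, znorm ξ ^ 2 * g (znorm ξ) := by
    rw [two_mul]
    nth_rw 2 [← rotate]
    rw [← finsum_mem_add_distrib hS, mul_finsum_mem' _ _ hS]
    refine finsum_mem_congr rfl fun ξ _ => ?_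
    rw [← add_mul, inner_latPt_sq_add_inner_latPt_rot90_sq, mul_assoc]
  linear_combination pair / 2

/-- The dihedral averaging identity behind the sector decomposition in Lemma 5.1 of the
paper: for every `t ∈ ℝ²`, `R > 0` and any weight `g : ℝ → ℝ`,
`∑_{ξ primitive, ‖ξ‖ ≤ R} ⟨t,ξ⟩² g(‖ξ‖) = (‖t‖²/2) ∑_{ξ primitive, ‖ξ‖ ≤ R} ‖ξ‖² g(‖ξ‖)`. -/
theorem primitive_sector_symmetry (t : EuclideanSpace ℝ (Fin 2)) (R : ℝ) (hR : 0 < R)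
    (g : ℝ → ℝ) :
    (∑ᶠ ξ ∈ {ξ : ℤ × ℤ | IsPrimitive ξ ∧ znorm ξ ≤ R}, ⟪t, latPt ξ⟫ ^ 2 * g (znorm ξ)) =
      ‖t‖ ^ 2 / 2 *
        ∑ᶠ ξ ∈ {ξ : ℤ × ℤ | IsPrimitive ξ ∧ znorm ξ ≤ R}, znorm ξ ^ 2 * g (znorm ξ) :=
  primitive_sector_symmetry_general t R g
end

section
/- Fix real numbers ε > 0 and L > 0, and define F : ℝ² → ℝ² by F(θ, φ) = ( π/2 − θ − φ , (ε/L)·( (1 − cos θ)/tan(π/2 − θ − φ) + sin θ ) ). Then at every point (θ, φ) with θ ∈ (0, π/2) and α := π/2 − θ − φ ∈ (0, π/2), the map F is differentiable and the determinant of its derivative satisfies det DF(θ, φ) · sin(π/2 − θ − φ) = (ε/L) · cos φ; equivalently det DF(θ,φ) = (ε/L)·cos φ / sin(π/2 − θ − φ). Consequently the measure (L/(4πε))·sin α · dα ∧ dz equals (1/(4π))·cos φ · dθ ∧ dφ under the change of variables (α, z) = F(θ, φ). -/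
/-! With `α = π/2 - θ - φ`, the map is `(θ, φ) ↦ (α, z(θ, α))`. In its Jacobian the
contribution of `∂z/∂α` cancels, because `α` has the same partial derivative `-1` in `θ` and
in `φ`; hence `det DF = ∂z/∂θ = (ε/L)(sin θ cot α + cos θ)`, and multiplying by `sin α` gives
`(ε/L) sin (θ + α) = (ε/L) cos φ`. -/

open Real ContinuousLinearMap

theorem LinearMap.det_prod_fin_two {𝕜 : Type*} [Field 𝕜] (f g : 𝕜 × 𝕜 →ₗ[𝕜] 𝕜) :
    (f.prod g).det = f (1, 0) * g (0, 1) - f (0, 1) * g (1, 0) := by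
  rw [← LinearMap.det_toMatrix (Module.Basis.finTwoProd 𝕜), Matrix.det_fin_two]
  simp [LinearMap.toMatrix_apply]

theorem Real.hasDerivAt_cot {x : ℝ} (hx : sin x ≠ 0) : HasDerivAt cot (-1 / sin x ^ 2) x := by
  have h := (hasDerivAt_cos x).div (hasDerivAt_sin x) hx
  refine (h.congr_deriv ?_).congr_of_eventuallyEq (Filter.Eventually.of_forall fun t => ?_)
  · rw [← sin_sq_add_cos_sq x]; ring
  · exact cot_eq_cos_div_sin t

section ComplementaryAngle

variable {Z : ℝ × ℝ → ℝ} {D : ℝ × ℝ →L[ℝ] ℝ} {k θ φ : ℝ}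

theorem hasFDerivAt_sub_sub_prod_comp (hZ : HasFDerivAt Z D (θ, k - θ - φ)) :
    HasFDerivAt (fun x : ℝ × ℝ => (k - x.1 - x.2, Z (x.1, k - x.1 - x.2)))
      ((-fst ℝ ℝ ℝ - snd ℝ ℝ ℝ).prod (D ∘L (fst ℝ ℝ ℝ).prod (-fst ℝ ℝ ℝ - snd ℝ ℝ ℝ))) (θ, φ) := by
  have hα : HasFDerivAt (fun x : ℝ × ℝ => k - x.1 - x.2) (-fst ℝ ℝ ℝ - snd ℝ ℝ ℝ) (θ, φ) :=
    ((hasFDerivAt_fst (p := (θ, φ))).const_sub k).sub hasFDerivAt_snd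
  exact hα.prodMk (hZ.comp (θ, φ) (hasFDerivAt_fst.prodMk hα))

theorem det_sub_sub_prod_comp_fderiv :
    LinearMap.det (((-fst ℝ ℝ ℝ - snd ℝ ℝ ℝ).prod
      (D ∘L (fst ℝ ℝ ℝ).prod (-fst ℝ ℝ ℝ - snd ℝ ℝ ℝ)) : ℝ × ℝ →L[ℝ] ℝ × ℝ) : ℝ × ℝ →ₗ[ℝ] ℝ × ℝ)
      = D (1, 0) := by
  rw [ContinuousLinearMap.coe_prod, LinearMap.det_prod_fin_two]
  simp [neg_add_eq_sub, ← map_sub]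

end ComplementaryAngle

theorem hasFDerivAt_one_sub_cos_mul_cot_add_sin {θ α : ℝ} (hα : sin α ≠ 0) :
    HasFDerivAt (fun p : ℝ × ℝ => (1 - cos p.1) * cot p.2 + sin p.1)
      ((sin θ * cot α + cos θ) • fst ℝ ℝ ℝ - ((1 - cos θ) / sin α ^ 2) • snd ℝ ℝ ℝ) (θ, α) := by
  have hcos : HasFDerivAt (fun p : ℝ × ℝ => cos p.1) (-sin θ • fst ℝ ℝ ℝ) (θ, α) :=
    (hasDerivAt_cos θ).comp_hasFDerivAt (h₂ := cos) (θ, α) hasFDerivAt_fst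
  have hcot : HasFDerivAt (fun p : ℝ × ℝ => cot p.2) ((-1 / sin α ^ 2) • snd ℝ ℝ ℝ) (θ, α) :=
    (hasDerivAt_cot hα).comp_hasFDerivAt (h₂ := cot) (θ, α) hasFDerivAt_snd
  have hsin : HasFDerivAt (fun p : ℝ × ℝ => sin p.1) (cos θ • fst ℝ ℝ ℝ) (θ, α) :=
    (hasDerivAt_sin θ).comp_hasFDerivAt (h₂ := sin) (θ, α) hasFDerivAt_fst
  refine ((hcos.const_sub 1).mul hcot |>.add hsin).congr_fderiv ?_
  ext <;> simp <;> ring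

theorem sin_mul_cot_add_cos_mul_sin (θ : ℝ) {α : ℝ} (hα : sin α ≠ 0) :
    (sin θ * cot α + cos θ) * sin α = sin (θ + α) := by
  rw [cot_eq_cos_div_sin, sin_add]
  field_simp

theorem corridor_volume_form_general (ε L : ℝ)
    (F : ℝ × ℝ → ℝ × ℝ)
    (hF : ∀ x : ℝ × ℝ, F x =
      (Real.pi / 2 - x.1 - x.2,
        (ε / L) * ((1 - Real.cos x.1) / Real.tan (Real.pi / 2 - x.1 - x.2) + Real.sin x.1)))
    (θ φ : ℝ)
    (hα : Real.pi / 2 - θ - φ ∈ Set.Ioo 0 (Real.pi / 2)) :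
    DifferentiableAt ℝ F (θ, φ) ∧
    LinearMap.det ((fderiv ℝ F (θ, φ)) : ℝ × ℝ →ₗ[ℝ] ℝ × ℝ) * Real.sin (Real.pi / 2 - θ - φ)
        = (ε / L) * Real.cos φ ∧
    LinearMap.det ((fderiv ℝ F (θ, φ)) : ℝ × ℝ →ₗ[ℝ] ℝ × ℝ)
        = (ε / L) * Real.cos φ / Real.sin (Real.pi / 2 - θ - φ) := by
  have hsin : sin (π / 2 - θ - φ) ≠ 0 :=
    (sin_pos_of_pos_of_lt_pi hα.1 (by linarith [hα.2, pi_pos])).ne'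
  have hF_cot : F = fun x => (π / 2 - x.1 - x.2,
      ε / L * ((1 - cos x.1) * cot (π / 2 - x.1 - x.2) + sin x.1)) := by
    funext x
    rw [hF, ← tan_inv_eq_cot, ← div_eq_mul_inv]
  have hF' : HasFDerivAt F _ (θ, φ) := hF_cot ▸
    hasFDerivAt_sub_sub_prod_comp ((hasFDerivAt_one_sub_cos_mul_cot_add_sin hsin).const_mul (ε / L))
  have hdet : LinearMap.det ((fderiv ℝ F (θ, φ)) : ℝ × ℝ →ₗ[ℝ] ℝ × ℝ) * sin (π / 2 - θ - φ)
      = ε / L * cos φ := by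
    rw [hF'.fderiv, det_sub_sub_prod_comp_fderiv]
    simp only [smul_apply, sub_apply, coe_fst', coe_snd', smul_eq_mul, mul_one, mul_zero, sub_zero]
    rw [mul_assoc, sin_mul_cot_add_cos_mul_sin θ hsin, show θ + (π / 2 - θ - φ) = π / 2 - φ by ring,
      sin_pi_div_two_sub]
  exact ⟨hF'.differentiableAt, hdet, eq_div_of_mul_eq hsin hdet⟩

/-- Lemma C.3 of the paper (change to corridor coordinates): for
`F(θ,φ) = (π/2 - θ - φ, (ε/L)((1 - cos θ)/tan(π/2 - θ - φ) + sin θ))`, at every point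
with `θ ∈ (0,π/2)` and `α = π/2 - θ - φ ∈ (0,π/2)`, `F` is differentiable and
`det DF(θ,φ) · sin(π/2 - θ - φ) = (ε/L) cos φ`; equivalently
`det DF(θ,φ) = (ε/L) cos φ / sin(π/2 - θ - φ)`. Consequently
`(L/(4πε)) sin α dα dz = (1/(4π)) cos φ dθ dφ` under `(α,z) = F(θ,φ)`. -/
theorem corridor_volume_form (ε L : ℝ) (hε : 0 < ε) (hL : 0 < L)
    (F : ℝ × ℝ → ℝ × ℝ)
    (hF : ∀ x : ℝ × ℝ, F x =
      (Real.pi / 2 - x.1 - x.2,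
        (ε / L) * ((1 - Real.cos x.1) / Real.tan (Real.pi / 2 - x.1 - x.2) + Real.sin x.1)))
    (θ φ : ℝ) (hθ : θ ∈ Set.Ioo 0 (Real.pi / 2))
    (hα : Real.pi / 2 - θ - φ ∈ Set.Ioo 0 (Real.pi / 2)) :
    DifferentiableAt ℝ F (θ, φ) ∧
    LinearMap.det ((fderiv ℝ F (θ, φ)) : ℝ × ℝ →ₗ[ℝ] ℝ × ℝ) * Real.sin (Real.pi / 2 - θ - φ)
        = (ε / L) * Real.cos φ ∧
    LinearMap.det ((fderiv ℝ F (θ, φ)) : ℝ × ℝ →ₗ[ℝ] ℝ × ℝ)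
        = (ε / L) * Real.cos φ / Real.sin (Real.pi / 2 - θ - φ) :=
  corridor_volume_form_general ε L F hF θ φ hα
end

section
/- Define g on pairs of integers by g(p, q) = ( p − q + 2p·⌊q/p⌋ , p ). Then for all integers p > 0 and q ≥ 0 with gcd(p, q) = 1: (i) the coordinates of g(p,q) are coprime, i.e. gcd(p − q + 2p·⌊q/p⌋, p) = 1; (ii) ‖g(p,q)‖ ≤ 4·‖(p,q)‖, where ‖·‖ is the Euclidean norm on ℤ²; and (iii) g is injective on the set of such pairs: if g(p,q) = g(p',q') for two pairs with positive first and nonnegative second coordinate, then (p,q) = (p',q'). -/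
/-- The Calkin–Wilf successor map on lattice points:
`g(p,q) = (p - q + 2p⌊q/p⌋, p)`. -/
def cwMap (ξ : ℤ × ℤ) : ℤ × ℤ :=
  (ξ.1 - ξ.2 + 2 * ξ.1 * ⌊(ξ.2 : ℚ) / (ξ.1 : ℚ)⌋, ξ.1)

lemma cw_floor_eq (p q : ℤ) (hp : 0 < p) : ⌊(q : ℚ) / (p : ℚ)⌋ = q / p := by
  obtain ⟨n, rfl⟩ := Int.eq_ofNat_of_zero_le hp.le
  exact_mod_cast Rat.floor_intCast_div_natCast q n

/-- Properties of the Calkin–Wilf map used in the proof of Lemma C.6 of the paper: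
on pairs `(p,q)` with `p > 0`, `q ≥ 0`, `gcd(p,q) = 1`, the map `g` preserves
coprimality, increases the Euclidean norm by a factor at most `4`, and is injective. -/
theorem calkin_wilf_properties :
    (∀ p q : ℤ, 0 < p → 0 ≤ q → Int.gcd p q = 1 →
      Int.gcd (cwMap (p, q)).1 (cwMap (p, q)).2 = 1) ∧
    (∀ p q : ℤ, 0 < p → 0 ≤ q → Int.gcd p q = 1 →
      znorm (cwMap (p, q)) ≤ 4 * znorm (p, q)) ∧
    (∀ p q p' q' : ℤ, 0 < p → 0 ≤ q → Int.gcd p q = 1 →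
      0 < p' → 0 ≤ q' → Int.gcd p' q' = 1 →
      cwMap (p, q) = cwMap (p', q') → (p, q) = (p', q')) := by
  refine ⟨?_, ?_, ?_⟩
  · intro p q hp hq hg
    simp only [cwMap, cw_floor_eq p q hp]
    have h1 : p - q + 2 * p * (q / p) = -q + p * (1 + 2 * (q / p)) := by ring
    rw [h1, ← Int.isCoprime_iff_gcd_eq_one]
    exact ((Int.isCoprime_iff_gcd_eq_one.mpr hg).symm.neg_left).add_mul_left_left _
  · intro p q hp hq hg
    set d : ℤ := q / p with hd
    set r : ℤ := q % p with hr
    have hqd : p * d + r = q := Int.mul_ediv_add_emod q p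
    have hr0 : 0 ≤ r := Int.emod_nonneg q hp.ne'
    have hrp : r < p := Int.emod_lt_of_pos q hp
    have hd0 : 0 ≤ d := Int.ediv_nonneg hq hp.le
    have hpd : 0 ≤ p * d := mul_nonneg hp.le hd0
    set a : ℤ := p - q + 2 * p * d with ha
    have ha' : a = p + p * d - r := by rw [ha, ← hqd]; ring
    have ha1 : 0 < a := by omega
    have ha2 : a ≤ p + q := by omega
    have key : (a : ℝ) ^ 2 + (p : ℝ) ^ 2 ≤ 16 * ((p : ℝ) ^ 2 + (q : ℝ) ^ 2) := by
      have h1 : a ^ 2 + p ^ 2 ≤ 16 * (p ^ 2 + q ^ 2) := by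
        nlinarith [mul_self_le_mul_self ha1.le ha2, sq_nonneg q, sq_nonneg p, sq_nonneg (p+q)]
      exact_mod_cast h1
    simp only [cwMap, cw_floor_eq p q hp, znorm, ← hd, ← ha]
    calc Real.sqrt ((a : ℝ) ^ 2 + (p : ℝ) ^ 2)
        ≤ Real.sqrt (16 * ((p : ℝ) ^ 2 + (q : ℝ) ^ 2)) := Real.sqrt_le_sqrt key
      _ = 4 * Real.sqrt ((p : ℝ) ^ 2 + (q : ℝ) ^ 2) := by
          rw [Real.sqrt_mul (by norm_num), show (16 : ℝ) = 4 ^ 2 by norm_num,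
            Real.sqrt_sq (by norm_num)]
  · intro p q p' q' hp hq hg hp' hq' hg' heq
    simp only [cwMap, Prod.mk.injEq] at heq
    obtain ⟨h1, h2⟩ := heq
    subst h2
    rw [cw_floor_eq p q hp, cw_floor_eq p q' hp] at h1
    set d : ℤ := q / p with hd
    set d' : ℤ := q' / p with hd'
    have hqd : p * d + q % p = q := Int.mul_ediv_add_emod q p
    have hqd' : p * d' + q' % p = q' := Int.mul_ediv_add_emod q' p
    have hr0 : 0 ≤ q % p := Int.emod_nonneg q hp.ne'
    have hrp : q % p < p := Int.emod_lt_of_pos q hp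
    have hr0' : 0 ≤ q' % p := Int.emod_nonneg q' hp.ne'
    have hrp' : q' % p < p := Int.emod_lt_of_pos q' hp
    have hdd : d = d' := by
      by_contra hne
      have h3 : p * (d - d') = q % p - q' % p := by linear_combination h1 - hqd + hqd' 
      have h4 : 1 ≤ |d - d'| := Int.one_le_abs (sub_ne_zero.mpr hne)
      have h5 : |p * (d - d')| = p * |d - d'| := by
        rw [abs_mul, abs_of_pos hp]
      have h6 : p ≤ |p * (d - d')| := by
        rw [h5]; nlinarith
      rw [h3] at h6
      have h7 : |q % p - q' % p| < p := abs_lt.mpr ⟨by omega, by omega⟩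
      omega
    have hqq : q = q' := by rw [hdd] at h1; omega
    rw [hqq]
end
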